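/- arXiv:2602.06525 — 3 statements merged into one kernel-verified Lean document; each statement's English description precedes it below -/
import Mathlib

section
/- Suppose each controller keeps C_i invariant and additionally there is a uniform horizon h ≥ 1 such that for every i and every x_t ∈ Ω_i, the trajectory satisfies x_{t+h} ∉ Ω_i. Then from any initial state the trajectory enters S₀ within n·h steps, where n is the number of operating regions. -/
/-!
The sets `C i` decrease in `i`, `C 1` is the whole space and `C (n + 1) = S0`. Invariance of
`C i` under `π i`, together with `S0` being absorbing, keeps a trajectory that has entered `C i`
inside `C i` forever. If the trajectory is in `Ω j ⊆ C j` at time `t`, then at time `t + h` it is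
in `C j` but not in `Ω j`, hence in `C (j + 1)`: every `h` steps the index of `C` grows by one,
so after `n * h` steps the trajectory lies in `C (n + 1) = S0`.
-/

open Set

section Regions

variable {X : Type*} {Ω : ℕ → Set X} {S0 : Set X} {n i j : ℕ} {x : X}

def regionsFrom (Ω : ℕ → Set X) (S0 : Set X) (n i : ℕ) : Set X :=
  (⋃ j ∈ Finset.Icc 1 n, ⋃ _ : i ≤ j, Ω j) ∪ S0

theorem mem_regionsFrom :
    x ∈ regionsFrom Ω S0 n i ↔ (∃ j ∈ Finset.Icc 1 n, i ≤ j ∧ x ∈ Ω j) ∨ x ∈ S0 := by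
  simp only [regionsFrom, mem_union, mem_iUnion, exists_prop]

theorem mem_regionsFrom_of_mem (hj : j ∈ Finset.Icc 1 n) (hij : i ≤ j) (hx : x ∈ Ω j) :
    x ∈ regionsFrom Ω S0 n i :=
  mem_regionsFrom.2 (Or.inl ⟨j, hj, hij, hx⟩)

theorem mem_regionsFrom_of_mem_success (hx : x ∈ S0) : x ∈ regionsFrom Ω S0 n i :=
  mem_regionsFrom.2 (Or.inr hx)

theorem regionsFrom_antitone : Antitone (regionsFrom Ω S0 n) := by
  intro i i' hii' x hx
  obtain ⟨j, hj, hij, hxj⟩ | hx := mem_regionsFrom.1 hx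
  · exact mem_regionsFrom_of_mem hj (hii'.trans hij) hxj
  · exact mem_regionsFrom_of_mem_success hx

theorem mem_regionsFrom_one (hcover : x ∈ S0 ∨ ∃ i ∈ Finset.Icc 1 n, x ∈ Ω i) :
    x ∈ regionsFrom Ω S0 n 1 := by
  obtain hx | ⟨i, hi, hx⟩ := hcover
  · exact mem_regionsFrom_of_mem_success hx
  · exact mem_regionsFrom_of_mem hi (Finset.mem_Icc.1 hi).1 hx

theorem regionsFrom_succ_self : regionsFrom Ω S0 n (n + 1) = S0 := by
  ext x
  simp only [mem_regionsFrom, Finset.mem_Icc]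
  constructor
  · rintro (⟨j, ⟨-, hjn⟩, hnj, -⟩ | hx)
    · omega
    · exact hx
  · exact Or.inr

theorem mem_regionsFrom_succ_of_not_mem (hx : x ∈ regionsFrom Ω S0 n i) (hxi : x ∉ Ω i) :
    x ∈ regionsFrom Ω S0 n (i + 1) := by
  obtain ⟨j, hj, hij, hxj⟩ | hx := mem_regionsFrom.1 hx
  · have hji : j ≠ i := by rintro rfl; exact hxi hxj
    exact mem_regionsFrom_of_mem hj (by omega) hxj
  · exact mem_regionsFrom_of_mem_success hx

end Regions

section Trajectory

variable {X U : Type*} {n : ℕ} {f : X → U → X} {π : ℕ → X → U} {Ω : ℕ → Set X} {S0 : Set X}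
  {traj : ℕ → X}

theorem traj_add_mem_regionsFrom
    (hinv : ∀ i ∈ Finset.Icc 1 n, ∀ x ∈ Ω i, f x (π i x) ∈ regionsFrom Ω S0 n i)
    (hstep : ∀ t i, i ∈ Finset.Icc 1 n → traj t ∈ Ω i →
      traj (t + 1) = f (traj t) (π i (traj t)))
    (habs : ∀ t, traj t ∈ S0 → traj (t + 1) = traj t)
    {t i : ℕ} (ht : traj t ∈ regionsFrom Ω S0 n i) (s : ℕ) :
    traj (t + s) ∈ regionsFrom Ω S0 n i := by
  induction s with
  | zero => exact ht
  | succ s ih =>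
    rw [← add_assoc]
    obtain ⟨j, hj, hij, hxj⟩ | hx := mem_regionsFrom.1 ih
    · rw [hstep _ j hj hxj]
      exact regionsFrom_antitone hij (hinv j hj _ hxj)
    · rwa [habs _ hx]

theorem traj_add_horizon_mem_regionsFrom_succ
    (hinv : ∀ i ∈ Finset.Icc 1 n, ∀ x ∈ Ω i, f x (π i x) ∈ regionsFrom Ω S0 n i)
    (hstep : ∀ t i, i ∈ Finset.Icc 1 n → traj t ∈ Ω i →
      traj (t + 1) = f (traj t) (π i (traj t)))
    (habs : ∀ t, traj t ∈ S0 → traj (t + 1) = traj t)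
    {h : ℕ} (hhor : ∀ t, ∀ i ∈ Finset.Icc 1 n, traj t ∈ Ω i → traj (t + h) ∉ Ω i)
    {t i : ℕ} (ht : traj t ∈ regionsFrom Ω S0 n i) :
    traj (t + h) ∈ regionsFrom Ω S0 n (i + 1) := by
  obtain ⟨j, hj, hij, hxj⟩ | hx := mem_regionsFrom.1 ht
  · have hjh : traj (t + h) ∈ regionsFrom Ω S0 n j :=
      traj_add_mem_regionsFrom hinv hstep habs (mem_regionsFrom_of_mem hj le_rfl hxj) h
    exact regionsFrom_antitone (Nat.succ_le_succ hij)
      (mem_regionsFrom_succ_of_not_mem hjh (hhor t j hj hxj))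
  · exact traj_add_mem_regionsFrom hinv hstep habs (mem_regionsFrom_of_mem_success hx) h

end Trajectory

theorem stmt4_general {X U : Type*} (n : ℕ) (f : X → U → X) (π : ℕ → X → U)
    (Ω : ℕ → Set X) (S0 : Set X) (C : ℕ → Set X)
    (hC : ∀ i, C i = (⋃ j ∈ Finset.Icc 1 n, ⋃ _ : i ≤ j, Ω j) ∪ S0)
    (hcover : ∀ x : X, x ∈ S0 ∨ ∃ i ∈ Finset.Icc 1 n, x ∈ Ω i)
    (hinv : ∀ i ∈ Finset.Icc 1 n, ∀ x ∈ Ω i, f x (π i x) ∈ C i)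
    (traj : ℕ → X)
    (hstep : ∀ t i, i ∈ Finset.Icc 1 n → traj t ∈ Ω i →
      traj (t + 1) = f (traj t) (π i (traj t)))
    (habs : ∀ t, traj t ∈ S0 → traj (t + 1) = traj t)
    (h : ℕ)
    (hhor : ∀ t, ∀ i ∈ Finset.Icc 1 n, traj t ∈ Ω i → traj (t + h) ∉ Ω i) :
    ∃ t ≤ n * h, traj t ∈ S0 := by
  obtain rfl : C = regionsFrom Ω S0 n := funext hC
  have hmul : ∀ k, traj (k * h) ∈ regionsFrom Ω S0 n (k + 1) := by
    intro k
    induction k with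
    | zero => simpa using mem_regionsFrom_one (hcover (traj 0))
    | succ k ih =>
      rw [Nat.succ_mul]
      exact traj_add_horizon_mem_regionsFrom_succ hinv hstep habs hhor ih
  refine ⟨n * h, le_rfl, ?_⟩
  simpa only [regionsFrom_succ_self] using hmul n

theorem stmt4 {X U : Type*} (n : ℕ) (f : X → U → X) (π : ℕ → X → U)
    (Ω : ℕ → Set X) (S0 : Set X) (C : ℕ → Set X)
    (hC : ∀ i, C i = (⋃ j ∈ Finset.Icc 1 n, ⋃ _ : i ≤ j, Ω j) ∪ S0)
    (hcover : ∀ x : X, x ∈ S0 ∨ ∃ i ∈ Finset.Icc 1 n, x ∈ Ω i)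
    (hdisjS : ∀ i ∈ Finset.Icc 1 n, Disjoint (Ω i) S0)
    (hdisj : ∀ i ∈ Finset.Icc 1 n, ∀ j ∈ Finset.Icc 1 n, i ≠ j → Disjoint (Ω i) (Ω j))
    (hinv : ∀ i ∈ Finset.Icc 1 n, ∀ x ∈ Ω i, f x (π i x) ∈ C i)
    (traj : ℕ → X)
    (hstep : ∀ t i, i ∈ Finset.Icc 1 n → traj t ∈ Ω i →
      traj (t + 1) = f (traj t) (π i (traj t)))
    (habs : ∀ t, traj t ∈ S0 → traj (t + 1) = traj t)
    (h : ℕ) (hh : 1 ≤ h)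
    (hhor : ∀ t, ∀ i ∈ Finset.Icc 1 n, traj t ∈ Ω i → traj (t + h) ∉ Ω i) :
    ∃ t ≤ n * h, traj t ∈ S0 :=
  stmt4_general n f π Ω S0 C hC hcover hinv traj hstep habs h hhor
end

section
/- Suppose V satisfies the undiscounted feasibility Bellman equation V(x) = min(l(x), max_u V(f(x,u))) and l(x) > 0 ⟺ x ∈ K. Then any trajectory x_{t+1} = f(x_t, u_t) with actions chosen so that V(f(x_t, u_t)) ≥ V(x_t) at every step, starting from x₀ with V(x₀) > 0, remains in K for all time. -/
theorem monotone_comp_of_le_step {X U β : Type*} [Preorder β] (f : X → U → X) (V : X → β)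
    (x : ℕ → X) (u : ℕ → U) (hstep : ∀ t, x (t + 1) = f (x t) (u t))
    (hfeas : ∀ t, V (x t) ≤ V (f (x t) (u t))) :
    Monotone (V ∘ x) :=
  monotone_nat_of_le_succ fun t => by simpa only [Function.comp_apply, hstep t] using hfeas t

theorem le_of_eq_min_sup' {X U β : Type*} [Fintype U] [Nonempty U] [LinearOrder β]
    (f : X → U → X) (l V : X → β)
    (hV : ∀ x, V x = min (l x) (Finset.univ.sup' Finset.univ_nonempty (fun u => V (f x u))))
    (x : X) :
    V x ≤ l x :=
  (hV x).le.trans (min_le_left _ _)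

theorem stmt13 {X U : Type*} [Fintype U] [Nonempty U]
    (f : X → U → X) (K : Set X) (l : X → ℝ)
    (hK : ∀ x, 0 < l x ↔ x ∈ K)
    (V : X → ℝ)
    (hV : ∀ x, V x = min (l x)
      (Finset.univ.sup' Finset.univ_nonempty (fun u => V (f x u))))
    (x : ℕ → X) (u : ℕ → U)
    (hstep : ∀ t, x (t + 1) = f (x t) (u t))
    (hfeas : ∀ t, V (x t) ≤ V (f (x t) (u t)))
    (h0 : 0 < V (x 0)) :
    ∀ t, x t ∈ K := by
  intro t
  have hpos : 0 < V (x t) :=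
    h0.trans_le (monotone_comp_of_le_step f V x u hstep hfeas (Nat.zero_le t))
  exact (hK (x t)).mp (hpos.trans_le (le_of_eq_min_sup' f l V hV (x t)))
end

section
/- Let V_γ denote the unique bounded fixed point of the discounted feasibility operator with parameter γ, and suppose l is bounded with ‖l‖_∞ = M. Then for γ, γ' ∈ [0,1), ‖V_γ − V_{γ'}‖_∞ ≤ 2M·|γ − γ'| / (1 − max(γ, γ')). -/
/-!
Both fixed points are bounded by `M`, so swapping the discount factor moves `T_γ V` by at most
`2M|γ - γ'|`, while `T_γ'` is a `γ'`-contraction in the sup norm. Hence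
`‖V_γ - V_γ'‖ ≤ 2M|γ - γ'| + max γ γ' · ‖V_γ - V_γ'‖`, which rearranges to the claim.
-/

open Finset

lemma forall_le_of_bound_improves {X : Type*} {g : X → ℝ} {c m : ℝ}
    (hg : ∃ B, ∀ x, g x ≤ B) (hm0 : 0 ≤ m) (hm1 : m < 1)
    (h : ∀ D, c ≤ D → (∀ x, g x ≤ D) → ∀ x, g x ≤ (1 - m) * c + m * D) :
    ∀ x, g x ≤ c := by
  intro x₀
  have : Nonempty X := ⟨x₀⟩
  obtain ⟨B, hB⟩ := hg
  have hbdd : BddAbove (Set.range g) := ⟨B, Set.forall_mem_range.2 hB⟩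
  set D := max c (⨆ x, g x)
  have hgD : ∀ x, g x ≤ D := fun x => (le_ciSup hbdd x).trans (le_max_right _ _)
  have hcD : c ≤ (1 - m) * c + m * D := by
    linarith [mul_le_mul_of_nonneg_left (le_max_left c (⨆ x, g x)) hm0]
  have hD : D ≤ (1 - m) * c + m * D := max_le hcD (ciSup_le (h D (le_max_left _ _) hgD))
  have hDc : D ≤ c := le_of_mul_le_mul_left (by linarith : (1 - m) * D ≤ (1 - m) * c) (by linarith)
  exact (hgD x₀).trans hDc

section SupMin

variable {ι : Type*} {s : Finset ι} (hs : s.Nonempty)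

lemma sup'_le_sup'_add {g h : ι → ℝ} {D : ℝ} (hgh : ∀ i ∈ s, g i ≤ h i + D) :
    s.sup' hs g ≤ s.sup' hs h + D :=
  sup'_le hs g fun i hi => (hgh i hi).trans (by gcongr; exact le_sup' h hi)

lemma abs_sup'_sub_sup'_le {g h : ι → ℝ} {D : ℝ} (hgh : ∀ i ∈ s, |g i - h i| ≤ D) :
    |s.sup' hs g - s.sup' hs h| ≤ D := by
  rw [abs_sub_le_iff]
  constructor
  · have := sup'_le_sup'_add hs (g := g) (h := h) (D := D) fun i hi => by
      linarith [(abs_sub_le_iff.1 (hgh i hi)).1]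
    linarith
  · have := sup'_le_sup'_add hs (g := h) (h := g) (D := D) fun i hi => by
      linarith [(abs_sub_le_iff.1 (hgh i hi)).2]
    linarith

lemma abs_min_sup'_le {a D : ℝ} {g : ι → ℝ} (ha : |a| ≤ D) (hg : ∀ i ∈ s, |g i| ≤ D) :
    |min a (s.sup' hs g)| ≤ D := by
  obtain ⟨i, hi⟩ := id hs
  exact abs_le.2 ⟨le_min (abs_le.1 ha).1 ((abs_le.1 (hg i hi)).1.trans (le_sup' g hi)),
    (min_le_left _ _).trans (abs_le.1 ha).2⟩

end SupMin

section FeasibilityOperator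

variable {X U : Type*} [Fintype U] [Nonempty U] (f : X → U → X) (l : X → ℝ)

noncomputable def discountedFeasibilityOp (γ : ℝ) (V : X → ℝ) (x : X) : ℝ :=
  (1 - γ) * l x + γ * min (l x) (univ.sup' univ_nonempty fun u => V (f x u))

variable {f l} {M : ℝ}

lemma abs_discountedFeasibilityOp_le {γ D : ℝ} {V : X → ℝ} (hl : ∀ x, |l x| ≤ M) (hMD : M ≤ D)
    (hV : ∀ x, |V x| ≤ D) (hγ0 : 0 ≤ γ) (hγ1 : γ ≤ 1) (x : X) :
    |discountedFeasibilityOp f l γ V x| ≤ (1 - γ) * M + γ * D := by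
  have hmin := abs_min_sup'_le univ_nonempty ((hl x).trans hMD) fun u _ => hV (f x u)
  calc |discountedFeasibilityOp f l γ V x|
      ≤ |(1 - γ) * l x| + |γ * min (l x) (univ.sup' univ_nonempty fun u => V (f x u))| :=
        abs_add_le _ _
    _ = (1 - γ) * |l x| + γ * |min (l x) (univ.sup' univ_nonempty fun u => V (f x u))| := by
        rw [abs_mul, abs_mul, abs_of_nonneg (sub_nonneg.2 hγ1), abs_of_nonneg hγ0]
    _ ≤ (1 - γ) * M + γ * D :=
        add_le_add (mul_le_mul_of_nonneg_left (hl x) (sub_nonneg.2 hγ1))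
          (mul_le_mul_of_nonneg_left hmin hγ0)

lemma abs_discountedFeasibilityOp_sub_le {γ D : ℝ} {V V' : X → ℝ} (hγ : 0 ≤ γ)
    (hVV' : ∀ y, |V y - V' y| ≤ D) (x : X) :
    |discountedFeasibilityOp f l γ V x - discountedFeasibilityOp f l γ V' x| ≤ γ * D := by
  have hsup := abs_sup'_sub_sup'_le univ_nonempty fun u _ => hVV' (f x u)
  have hmin := (abs_min_sub_min_le_max (l x) (univ.sup' univ_nonempty fun u => V (f x u)) (l x)
    (univ.sup' univ_nonempty fun u => V' (f x u))).trans (by simpa using hsup)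
  rw [discountedFeasibilityOp, discountedFeasibilityOp, add_sub_add_left_eq_sub, ← mul_sub,
    abs_mul, abs_of_nonneg hγ]
  exact mul_le_mul_of_nonneg_left hmin hγ

lemma abs_discountedFeasibilityOp_sub_discount_le {γ γ' : ℝ} {V : X → ℝ}
    (hl : ∀ x, |l x| ≤ M) (hV : ∀ x, |V x| ≤ M) (x : X) :
    |discountedFeasibilityOp f l γ V x - discountedFeasibilityOp f l γ' V x| ≤
      2 * M * |γ - γ'| := by
  set S := univ.sup' univ_nonempty fun u => V (f x u)
  have hmin : |min (l x) S| ≤ M := abs_min_sup'_le univ_nonempty (hl x) fun u _ => hV (f x u)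
  have hdiff : discountedFeasibilityOp f l γ V x - discountedFeasibilityOp f l γ' V x =
      (γ - γ') * (min (l x) S - l x) := by
    simp only [discountedFeasibilityOp, S]; ring
  rw [hdiff, abs_mul, mul_comm]
  gcongr
  linarith [abs_sub (min (l x) S) (l x), hl x]

lemma abs_le_of_eq_discountedFeasibilityOp {γ : ℝ} {V : X → ℝ} (hl : ∀ x, |l x| ≤ M)
    (hγ0 : 0 ≤ γ) (hγ1 : γ < 1) (hVb : ∃ B, ∀ x, |V x| ≤ B)
    (hV : ∀ x, V x = discountedFeasibilityOp f l γ V x) :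
    ∀ x, |V x| ≤ M :=
  forall_le_of_bound_improves hVb hγ0 hγ1 fun _ hMD hVD x =>
    hV x ▸ abs_discountedFeasibilityOp_le hl hMD hVD hγ0 hγ1.le x

end FeasibilityOperator

theorem stmt16 {X U : Type*} [Fintype U] [Nonempty U]
    (f : X → U → X) (l : X → ℝ) (M : ℝ) (hM : ∀ x, |l x| ≤ M)
    (γ γ' : ℝ) (hγ0 : 0 ≤ γ) (hγ1 : γ < 1) (hγ'0 : 0 ≤ γ') (hγ'1 : γ' < 1)
    (V V' : X → ℝ)
    (hVb : ∃ B, ∀ x, |V x| ≤ B) (hV'b : ∃ B, ∀ x, |V' x| ≤ B)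
    (hV : ∀ x, V x = (1 - γ) * l x +
      γ * min (l x) (Finset.univ.sup' Finset.univ_nonempty (fun u => V (f x u))))
    (hV' : ∀ x, V' x = (1 - γ') * l x +
      γ' * min (l x) (Finset.univ.sup' Finset.univ_nonempty (fun u => V' (f x u)))) :
    ∀ x, |V x - V' x| ≤ 2 * M * |γ - γ'| / (1 - max γ γ') := by
  have hT : ∀ x, V x = discountedFeasibilityOp f l γ V x := hV
  have hT' : ∀ x, V' x = discountedFeasibilityOp f l γ' V' x := hV'
  have hVM := abs_le_of_eq_discountedFeasibilityOp hM hγ0 hγ1 hVb hT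
  have hm1 : max γ γ' < 1 := max_lt hγ1 hγ'1
  obtain ⟨B, hB⟩ := hVb
  obtain ⟨B', hB'⟩ := hV'b
  refine forall_le_of_bound_improves (g := fun x => |V x - V' x|)
    ⟨B + B', fun x => (abs_sub _ _).trans (add_le_add (hB x) (hB' x))⟩
    (hγ0.trans (le_max_left _ _)) hm1 fun D _ hD x => ?_
  rw [mul_div_cancel₀ _ (sub_pos.2 hm1).ne']
  calc |V x - V' x|
      = |(discountedFeasibilityOp f l γ V x - discountedFeasibilityOp f l γ' V x) +
          (discountedFeasibilityOp f l γ' V x - discountedFeasibilityOp f l γ' V' x)| := by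
        rw [hT x, hT' x]; ring_nf
    _ ≤ 2 * M * |γ - γ'| + γ' * D :=
        (abs_add_le _ _).trans (add_le_add (abs_discountedFeasibilityOp_sub_discount_le hM hVM x)
          (abs_discountedFeasibilityOp_sub_le hγ'0 hD x))
    _ ≤ 2 * M * |γ - γ'| + max γ γ' * D := by
        gcongr
        · exact (abs_nonneg _).trans (hD x)
        · exact le_max_right _ _
end
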